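/- arXiv:2604.15158 — 3 statements merged into one kernel-verified Lean document; each statement's English description precedes it below -/
import Mathlib

section
/- Let F = 𝔽_q be a finite field, K = 𝔽_{q^m} a degree-m extension, and G a finite group. If C ⊆ KG is a left FG-submodule of the group algebra KG (an additive left group code), then its orthogonal complement C^⊥ with respect to the trace-Euclidean form ⟨x,y⟩_TE = Tr_{K/F}(Σ_{g∈G} x_g y_g) is again a left FG-submodule of KG. -/
open MonoidAlgebra

/-- The trace-Euclidean form on the group algebra `KG`:
`⟨x,y⟩_TE = Tr_{K/F}(Σ_{g∈G} x_g y_g)`. -/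
noncomputable def TE (F : Type) {K G : Type} [Field F] [Field K] [Algebra F K]
    [Fintype G] (x y : MonoidAlgebra K G) : F :=
  Algebra.trace F K (∑ g : G, x.coeff g * y.coeff g)

/-- The involution of `KG` induced by inversion in `G`:
`(Σ a_g g)* = Σ a_g g⁻¹`, i.e. the coefficient of `g` in `a*` is `a (g⁻¹)`. -/
def starG {K G : Type} [Semiring K] [Group G] (a : MonoidAlgebra K G) : MonoidAlgebra K G :=
  MonoidAlgebra.ofCoeff (Finsupp.equivMapDomain (Equiv.inv G) a.coeff)

/-- The coefficientwise embedding of the group algebra `FG` into `KG`. -/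
noncomputable def fgMap (F K G : Type) [Field F] [Field K] [Algebra F K] [Group G] :
    MonoidAlgebra F G →ₐ[F] MonoidAlgebra K G :=
  MonoidAlgebra.lift F (MonoidAlgebra K G) G (MonoidAlgebra.of K G)

/-- `KG` as a left `FG`-module via the coefficientwise embedding `FG ⊆ KG`
followed by left multiplication. -/
noncomputable instance fgModule (F K G : Type) [Field F] [Field K] [Algebra F K] [Group G] :
    Module (MonoidAlgebra F G) (MonoidAlgebra K G) :=
  Module.compHom _ (fgMap F K G).toRingHom

/-!
The form `Σ_g x_g y_g` satisfies `⟨u x, y⟩ = ⟨x, u* y⟩` for every `u ∈ KG`, where `u*` is the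
involution induced by `g ↦ g⁻¹`; applying `Tr_{K/F}` preserves this. Since `*` maps `FG` into
itself, `a • x ∈ C^⊥` for `a ∈ FG` and `x ∈ C^⊥`, because `a* • c ∈ C` for every `c ∈ C`.
-/

section Involution

variable {K G : Type} [Semiring K] [Group G]

lemma starG_coeff (a : MonoidAlgebra K G) (g : G) : (starG a).coeff g = a.coeff g⁻¹ := rfl

lemma starG_add (a b : MonoidAlgebra K G) : starG (a + b) = starG a + starG b := by
  ext g
  rfl

lemma starG_single (h : G) (r : K) : starG (single h r) = single h⁻¹ r := by
  classical
  ext g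
  simp [starG_coeff, coeff_single, Finsupp.single_apply, inv_eq_iff_eq_inv]

end Involution

section EuclideanForm

variable {K G : Type} [CommSemiring K] [Fintype G]

def euclideanForm (x y : MonoidAlgebra K G) : K := ∑ g : G, x.coeff g * y.coeff g

lemma euclideanForm_zero_left (y : MonoidAlgebra K G) : euclideanForm 0 y = 0 := by
  simp [euclideanForm]

lemma euclideanForm_add_left (x x' y : MonoidAlgebra K G) :
    euclideanForm (x + x') y = euclideanForm x y + euclideanForm x' y := by
  simp only [euclideanForm, coeff_add, Finsupp.add_apply, add_mul, Finset.sum_add_distrib]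

lemma euclideanForm_add_right (x y y' : MonoidAlgebra K G) :
    euclideanForm x (y + y') = euclideanForm x y + euclideanForm x y' := by
  simp only [euclideanForm, coeff_add, Finsupp.add_apply, mul_add, Finset.sum_add_distrib]

lemma euclideanForm_mul_left [Group G] (u x y : MonoidAlgebra K G) :
    euclideanForm (u * x) y = euclideanForm x (starG u * y) := by
  induction u using MonoidAlgebra.induction_linear with
  | zero => simp [euclideanForm, starG]
  | add a b ha hb =>
    rw [add_mul, euclideanForm_add_left, ha, hb, starG_add, add_mul, euclideanForm_add_right]
  | single h r =>
    rw [starG_single]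
    simp only [euclideanForm, coeff_single_mul_apply, inv_inv]
    exact (Fintype.sum_equiv (Equiv.mulLeft h) _ _
      fun g => by simp only [Equiv.coe_mulLeft, inv_mul_cancel_left]; ring).symm

end EuclideanForm

section TraceEuclidean

variable {F K G : Type} [Field F] [Field K] [Algebra F K] [Fintype G]

lemma TE_eq_trace_euclideanForm (x y : MonoidAlgebra K G) :
    TE F x y = Algebra.trace F K (euclideanForm x y) := rfl

lemma TE_zero_left (y : MonoidAlgebra K G) : TE F 0 y = 0 := by
  rw [TE_eq_trace_euclideanForm, euclideanForm_zero_left, map_zero]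

lemma TE_add_left (x x' y : MonoidAlgebra K G) : TE F (x + x') y = TE F x y + TE F x' y := by
  simp only [TE_eq_trace_euclideanForm, euclideanForm_add_left, map_add]

end TraceEuclidean

section GroupCode

variable {F K G : Type} [Field F] [Field K] [Algebra F K] [Group G]

lemma fgMap_eq_mapAlgHom : fgMap F K G = mapAlgHom G (Algebra.ofId F K) :=
  algHom_ext (fun g => by simp [fgMap]) (Subsingleton.elim _ _)

lemma fgMap_coeff (a : MonoidAlgebra F G) (g : G) :
    (fgMap F K G a).coeff g = algebraMap F K (a.coeff g) := by
  rw [fgMap_eq_mapAlgHom, coeff_mapAlgHom]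
  rfl

lemma starG_fgMap (a : MonoidAlgebra F G) : starG (fgMap F K G a) = fgMap F K G (starG a) := by
  ext g
  simp only [starG_coeff, fgMap_coeff]

lemma fgModule_smul_def (a : MonoidAlgebra F G) (x : MonoidAlgebra K G) :
    a • x = fgMap F K G a * x := rfl

variable [Fintype G]

lemma TE_smul_left (a : MonoidAlgebra F G) (x y : MonoidAlgebra K G) :
    TE F (a • x) y = TE F x (starG a • y) := by
  simp only [TE_eq_trace_euclideanForm, fgModule_smul_def, euclideanForm_mul_left, starG_fgMap]

variable (F) in
def teDual (C : Submodule (MonoidAlgebra F G) (MonoidAlgebra K G)) :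
    Submodule (MonoidAlgebra F G) (MonoidAlgebra K G) where
  carrier := {x | ∀ c ∈ C, TE F x c = 0}
  zero_mem' _ _ := TE_zero_left _
  add_mem' hx hx' c hc := by rw [TE_add_left, hx c hc, hx' c hc, add_zero]
  smul_mem' a x hx c hc := by rw [TE_smul_left]; exact hx _ (C.smul_mem _ hc)

end GroupCode

theorem te_dual_is_additive_group_code_general
    (F K G : Type) [Field F] [Field K] [Algebra F K]
    [Group G] [Fintype G]
    (C : Submodule (MonoidAlgebra F G) (MonoidAlgebra K G)) :
    ∃ D : Submodule (MonoidAlgebra F G) (MonoidAlgebra K G),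
      (D : Set (MonoidAlgebra K G)) = {x | ∀ c ∈ C, TE F x c = 0} :=
  ⟨teDual F C, rfl⟩

/-- If `C ⊆ KG` is a left `FG`-submodule (an additive left group code), then its
orthogonal complement with respect to the trace-Euclidean form is again a left
`FG`-submodule of `KG`. -/
theorem te_dual_is_additive_group_code
    (F K G : Type) [Field F] [Fintype F] [Field K] [Fintype K] [Algebra F K]
    [FiniteDimensional F K] [Group G] [Fintype G]
    (C : Submodule (MonoidAlgebra F G) (MonoidAlgebra K G)) :
    ∃ D : Submodule (MonoidAlgebra F G) (MonoidAlgebra K G),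
      (D : Set (MonoidAlgebra K G)) = {x | ∀ c ∈ C, TE F x c = 0} :=
  te_dual_is_additive_group_code_general F K G C
end

section
/- Let F = 𝔽_q be a finite field, K = 𝔽_{q^m} a degree-m extension, and G a finite group. If C ⊆ KG is a left ideal of the group algebra KG, then the Euclidean orthogonal and the trace-Euclidean orthogonal of C coincide: C^⊥_E = C^⊥_TE. -/
/-! The Euclidean form is `K`-linear in its second argument, and a left ideal is closed under
left multiplication by the scalars `single 1 k`. Hence if `x` is trace-orthogonal to `C`, then
`Tr (⟨x, c⟩_E * k) = 0` for every `k : K`, and nondegeneracy of the trace form of the extension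
`K / F` (separable, as `F` is finite, hence perfect) forces `⟨x, c⟩_E = 0`. -/

open MonoidAlgebra

theorem eq_zero_of_forall_trace_mul_eq_zero {F K : Type*} [Field F] [Field K] [Algebra F K]
    [FiniteDimensional F K] [Algebra.IsSeparable F K] {a : K}
    (h : ∀ k : K, Algebra.trace F K (a * k) = 0) : a = 0 :=
  (traceForm_nondegenerate F K).1 a h

theorem MonoidAlgebra.sum_coeff_mul_coeff_single_one_mul {K G : Type*} [CommSemiring K]
    [Monoid G] [Fintype G] (x c : MonoidAlgebra K G) (k : K) :
    ∑ g : G, x.coeff g * (single 1 k * c).coeff g = (∑ g : G, x.coeff g * c.coeff g) * k := by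
  simp only [coeff_single_one_mul, Finset.sum_mul, mul_comm k, mul_assoc]

theorem euclidean_dual_eq_trace_euclidean_dual_of_left_ideal_general
    (F K G : Type) [Field F] [Fintype F] [Field K] [Algebra F K]
    [FiniteDimensional F K] [Group G] [Fintype G]
    (C : Ideal (MonoidAlgebra K G)) :
    {x : MonoidAlgebra K G | ∀ c ∈ C, (∑ g : G, x.coeff g * c.coeff g) = 0} =
      {x : MonoidAlgebra K G | ∀ c ∈ C, TE F x c = 0} := by
  ext x
  refine ⟨fun h c hc => by rw [TE, h c hc, map_zero], fun h c hc => ?_⟩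
  refine eq_zero_of_forall_trace_mul_eq_zero (F := F) fun k => ?_
  rw [← sum_coeff_mul_coeff_single_one_mul]
  exact h _ (C.mul_mem_left (single 1 k) hc)

/-- If `C` is a left ideal of `KG`, then the Euclidean orthogonal and the
trace-Euclidean orthogonal of `C` coincide: `C^⊥_E = C^⊥_TE`. -/
theorem euclidean_dual_eq_trace_euclidean_dual_of_left_ideal
    (F K G : Type) [Field F] [Fintype F] [Field K] [Fintype K] [Algebra F K]
    [FiniteDimensional F K] [Group G] [Fintype G]
    (C : Ideal (MonoidAlgebra K G)) :
    {x : MonoidAlgebra K G | ∀ c ∈ C, (∑ g : G, x.coeff g * c.coeff g) = 0} =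
      {x : MonoidAlgebra K G | ∀ c ∈ C, TE F x c = 0} :=
  euclidean_dual_eq_trace_euclidean_dual_of_left_ideal_general F K G C
end

section
/- Let F = 𝔽_q be a finite field, K = 𝔽_{q^m} a degree-m extension, and G a finite group. Suppose U is a nonzero proper F-subspace of K such that K = U ⊕ U^⊥, where U^⊥ is the orthogonal of U in K with respect to the form ⟨α,β⟩ = Tr_{K/F}(αβ). Let π_U : K → K be the projection onto U along U^⊥, and define P : KG → KG coefficientwise by P(Σ_g λ_g g) = Σ_g π_U(λ_g) g. Then P is an FG-linear projector (P² = P) that is self-adjoint with respect to the trace-Euclidean form on KG, its image is Im(P) = {Σ_g u_g g : u_g ∈ U} and this image is a TE-LCD additive left group code, and P is not equal to right multiplication by any element of KG. -/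
open MonoidAlgebra

/-!
Since `K = U ⊕ U^⊥` and `U^⊥` is trace-orthogonal to `U`, the projection `π` satisfies
`Tr(π a · b) = Tr(π a · π b) = Tr(a · π b)`, so it is self-adjoint for the trace form, and the
trace form is nondegenerate on `U`. Everything about `P` is then read off coefficient by
coefficient: `FG` has coefficients in `F`, over which `π` is linear, and the basis vectors
`g·u` with `u ∈ U` lie in `UG`. If `P` were right multiplication by `a`, then `π` would be
multiplication by `a₁`; as `π` fixes a nonzero `u ∈ U`, this forces `π = id`, so `U^⊥ = 0`
and `U = K`.
-/

namespace IsCompl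

section Projection

variable {R M : Type*} [Ring R] [AddCommGroup M] [Module R M] {U W : Submodule R M}
  {π : M →ₗ[R] M}

theorem proj_add (hU : ∀ u ∈ U, π u = u) (hW : ∀ w ∈ W, π w = 0) {u w : M} (hu : u ∈ U)
    (hw : w ∈ W) : π (u + w) = u := by
  rw [map_add, hU u hu, hW w hw, add_zero]

theorem proj_mem (hUW : IsCompl U W) (hU : ∀ u ∈ U, π u = u) (hW : ∀ w ∈ W, π w = 0) (v : M) :
    π v ∈ U := by
  obtain ⟨u, hu, w, hw, rfl⟩ := Submodule.mem_sup.mp (hUW.sup_eq_top ▸ Submodule.mem_top (x := v))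
  rwa [proj_add hU hW hu hw]

theorem sub_proj_mem (hUW : IsCompl U W) (hU : ∀ u ∈ U, π u = u) (hW : ∀ w ∈ W, π w = 0)
    (v : M) : v - π v ∈ W := by
  obtain ⟨u, hu, w, hw, rfl⟩ := Submodule.mem_sup.mp (hUW.sup_eq_top ▸ Submodule.mem_top (x := v))
  rwa [proj_add hU hW hu hw, add_sub_cancel_left]

theorem proj_comp_self (hUW : IsCompl U W) (hU : ∀ u ∈ U, π u = u) (hW : ∀ w ∈ W, π w = 0) :
    π ∘ₗ π = π :=
  LinearMap.ext fun v => hU _ (hUW.proj_mem hU hW v)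

theorem range_proj (hUW : IsCompl U W) (hU : ∀ u ∈ U, π u = u) (hW : ∀ w ∈ W, π w = 0) :
    LinearMap.range π = U :=
  le_antisymm (LinearMap.range_le_iff_comap.mpr (Submodule.eq_top_iff'.mpr (hUW.proj_mem hU hW)))
    fun u hu => ⟨u, hU u hu⟩

end Projection

section Trace

variable {F K : Type*} [CommRing F] [CommRing K] [Algebra F K] {U W : Submodule F K}
  {π : K →ₗ[F] K}

theorem trace_proj_mul (hUW : IsCompl U W)
    (hperp : ∀ β : K, β ∈ W ↔ ∀ α ∈ U, Algebra.trace F K (α * β) = 0)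
    (hU : ∀ u ∈ U, π u = u) (hW : ∀ w ∈ W, π w = 0) (a b : K) :
    Algebra.trace F K (π a * b) = Algebra.trace F K (a * π b) := by
  have hb := (hperp _).mp (hUW.sub_proj_mem hU hW b) _ (hUW.proj_mem hU hW a)
  have ha := (hperp _).mp (hUW.sub_proj_mem hU hW a) _ (hUW.proj_mem hU hW b)
  calc Algebra.trace F K (π a * b)
      = Algebra.trace F K (π a * π b) + Algebra.trace F K (π a * (b - π b)) := by
        rw [← map_add]; ring_nf
    _ = Algebra.trace F K (π a * π b) + Algebra.trace F K (π b * (a - π a)) := by rw [hb, ha]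
    _ = Algebra.trace F K (a * π b) := by rw [← map_add]; ring_nf

theorem eq_zero_of_trace_mul_eq_zero (hUW : IsCompl U W)
    (hperp : ∀ β : K, β ∈ W ↔ ∀ α ∈ U, Algebra.trace F K (α * β) = 0) {x : K} (hx : x ∈ U)
    (h : ∀ u ∈ U, Algebra.trace F K (x * u) = 0) : x = 0 :=
  Submodule.disjoint_def.mp hUW.disjoint x hx <|
    (hperp x).mpr fun α hα => by rw [mul_comm]; exact h α hα

end Trace

theorem not_exists_proj_eq_mul {F K : Type*} [CommRing F] [CommRing K] [IsDomain K]
    [Algebra F K] {U W : Submodule F K} {π : K →ₗ[F] K} (hUW : IsCompl U W) (hU0 : U ≠ ⊥)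
    (hU1 : U ≠ ⊤) (hU : ∀ u ∈ U, π u = u) (hW : ∀ w ∈ W, π w = 0) :
    ¬ ∃ k : K, ∀ c, π c = c * k := by
  rintro ⟨k, hk⟩
  obtain ⟨u, hu, hu0⟩ := (Submodule.ne_bot_iff U).mp hU0
  have hk1 : k = 1 := mul_left_cancel₀ hu0 (by rw [← hk, hU u hu, mul_one])
  have hW0 : W = ⊥ := (Submodule.eq_bot_iff W).mpr fun w hw => by
    simpa [hk1] using (hk w).symm.trans (hW w hw)
  exact hU1 (by simpa [hW0] using hUW.sup_eq_top)

end IsCompl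

section Coefficientwise

variable {F K G : Type} [Field F] [Field K] [Algebra F K] {π : K →ₗ[F] K}
  {P : MonoidAlgebra K G →ₗ[F] MonoidAlgebra K G}

theorem comp_self_of_coeff (hP : ∀ x g, (P x).coeff g = π (x.coeff g)) (hπ : π ∘ₗ π = π) :
    P ∘ₗ P = P :=
  LinearMap.ext fun x => MonoidAlgebra.ext <| Finsupp.ext fun g => by
    rw [LinearMap.comp_apply, hP, hP, ← LinearMap.comp_apply, hπ]

theorem coe_range_of_coeff (hP : ∀ x g, (P x).coeff g = π (x.coeff g)) (hπ : π ∘ₗ π = π) :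
    (LinearMap.range P : Set (MonoidAlgebra K G)) = {x | ∀ g, x.coeff g ∈ LinearMap.range π} := by
  ext x
  refine ⟨?_, fun hx => ⟨x, ?_⟩⟩
  · rintro ⟨y, rfl⟩ g
    exact ⟨_, (hP y g).symm⟩
  · ext g
    obtain ⟨v, hv⟩ := hx g
    rw [hP, ← hv, ← LinearMap.comp_apply, hπ]

section Group

variable [Group G]

theorem fgModule_single_smul (g : G) (c : F) (y : MonoidAlgebra K G) :
    (single g c : MonoidAlgebra F G) • y = single g (algebraMap F K c) * y := by
  change fgMap F K G (single g c) * y = _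
  rw [fgMap, lift_single, of_apply, smul_single, Algebra.smul_def, mul_one]

theorem map_fgModule_smul_of_coeff (hP : ∀ x g, (P x).coeff g = π (x.coeff g))
    (a : MonoidAlgebra F G) (x : MonoidAlgebra K G) : P (a • x) = a • P x := by
  induction a using MonoidAlgebra.induction_linear with
  | zero => rw [zero_smul, zero_smul, map_zero]
  | add a b iha ihb => rw [add_smul, add_smul, map_add, iha, ihb]
  | single h c =>
    ext g
    rw [hP, fgModule_single_smul, fgModule_single_smul, coeff_single_mul_apply,
      coeff_single_mul_apply, hP, ← Algebra.smul_def, ← Algebra.smul_def, map_smul]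

theorem not_exists_eq_mul_right_of_coeff (hP : ∀ x g, (P x).coeff g = π (x.coeff g))
    (hmul : ¬ ∃ k : K, ∀ c, π c = c * k) : ¬ ∃ a : MonoidAlgebra K G, ∀ x, P x = x * a := by
  rintro ⟨a, ha⟩
  refine hmul ⟨a.coeff 1, fun c => ?_⟩
  simpa [hP] using congrArg (fun z => z.coeff 1) (ha (single 1 c))

end Group

variable [Fintype G]

theorem TE_single_right (x : MonoidAlgebra K G) (g : G) (u : K) :
    TE F x (single g u) = Algebra.trace F K (x.coeff g * u) := by
  rw [TE, Fintype.sum_eq_single g fun h hh => by simp [coeff_single, Ne.symm hh]]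
  simp [coeff_single]

theorem TE_map_left_of_coeff (hP : ∀ x g, (P x).coeff g = π (x.coeff g))
    (hadj : ∀ a b, Algebra.trace F K (π a * b) = Algebra.trace F K (a * π b))
    (x y : MonoidAlgebra K G) : TE F (P x) y = TE F x (P y) := by
  simp only [TE, hP, map_sum, hadj]

theorem range_inter_TE_orthogonal_of_coeff (hP : ∀ x g, (P x).coeff g = π (x.coeff g))
    (hπ : π ∘ₗ π = π)
    (hnd : ∀ x ∈ LinearMap.range π, (∀ u ∈ LinearMap.range π, Algebra.trace F K (x * u) = 0) →
      x = 0) :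
    (LinearMap.range P : Set (MonoidAlgebra K G)) ∩
        {x | ∀ c ∈ LinearMap.range P, TE F x c = 0} = {0} := by
  refine Set.eq_singleton_iff_unique_mem.mpr ⟨⟨zero_mem _, fun c _ => by simp [TE]⟩, ?_⟩
  rintro x ⟨hx, horth⟩
  rw [coe_range_of_coeff hP hπ] at hx
  have hsingle : ∀ g, ∀ u ∈ LinearMap.range π, single g u ∈ LinearMap.range P := fun g u hu => by
    rw [← SetLike.mem_coe, coe_range_of_coeff hP hπ]
    intro h
    by_cases hgh : g = h
    · simpa [coeff_single, hgh] using hu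
    · simp [coeff_single, hgh]
  ext g
  exact hnd _ (hx g) fun u hu => by rw [← TE_single_right]; exact horth _ (hsingle g u hu)

end Coefficientwise

theorem coefficientwise_projector_lcd_general
    (F K G : Type) [Field F] [Field K] [Algebra F K]
    [Group G] [Fintype G]
    (U Uperp : Submodule F K) (hU0 : U ≠ ⊥) (hU1 : U ≠ ⊤)
    (hperp : ∀ β : K, β ∈ Uperp ↔ ∀ α ∈ U, Algebra.trace F K (α * β) = 0)
    (hcompl : IsCompl U Uperp)
    (π : K →ₗ[F] K) (hπU : ∀ u ∈ U, π u = u) (hπperp : ∀ w ∈ Uperp, π w = 0)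
    (P : MonoidAlgebra K G →ₗ[F] MonoidAlgebra K G)
    (hP : ∀ (x : MonoidAlgebra K G) (g : G), (P x).coeff g = π (x.coeff g)) :
    (∀ (a : MonoidAlgebra F G) (x : MonoidAlgebra K G), P (a • x) = a • P x) ∧
    P ∘ₗ P = P ∧
    (∀ x y : MonoidAlgebra K G, TE F (P x) y = TE F x (P y)) ∧
    ((LinearMap.range P : Set (MonoidAlgebra K G)) = {x | ∀ g : G, x.coeff g ∈ U}) ∧
    ((LinearMap.range P : Set (MonoidAlgebra K G)) ∩
        {x | ∀ c ∈ LinearMap.range P, TE F x c = 0} = {0}) ∧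
    (¬ ∃ a : MonoidAlgebra K G, ∀ x : MonoidAlgebra K G, P x = x * a) := by
  have hidem := hcompl.proj_comp_self hπU hπperp
  have hrange := hcompl.range_proj hπU hπperp
  refine ⟨map_fgModule_smul_of_coeff hP, comp_self_of_coeff hP hidem,
    TE_map_left_of_coeff hP (hcompl.trace_proj_mul hperp hπU hπperp),
    hrange ▸ coe_range_of_coeff hP hidem,
    range_inter_TE_orthogonal_of_coeff hP hidem ?_,
    not_exists_eq_mul_right_of_coeff hP (hcompl.not_exists_proj_eq_mul hU0 hU1 hπU hπperp)⟩
  rw [hrange]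
  exact fun x hx => hcompl.eq_zero_of_trace_mul_eq_zero hperp hx

/-- Let `U` be a nonzero proper `F`-subspace of `K` with `K = U ⊕ U^⊥` for the
form `⟨α,β⟩ = Tr_{K/F}(αβ)`, let `π` be the projection onto `U` along `U^⊥`, and
let `P` act on `KG` coefficientwise by `π`.  Then `P` is an `FG`-linear
projector, self-adjoint with respect to the trace-Euclidean form, its image is
`UG = {Σ u_g g : u_g ∈ U}`, this image is a TE-LCD additive left group code, and
`P` is not right multiplication by any element of `KG`. -/
theorem coefficientwise_projector_lcd
    (F K G : Type) [Field F] [Fintype F] [Field K] [Fintype K] [Algebra F K]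
    [FiniteDimensional F K] [Group G] [Fintype G]
    (U Uperp : Submodule F K) (hU0 : U ≠ ⊥) (hU1 : U ≠ ⊤)
    (hperp : ∀ β : K, β ∈ Uperp ↔ ∀ α ∈ U, Algebra.trace F K (α * β) = 0)
    (hcompl : IsCompl U Uperp)
    (π : K →ₗ[F] K) (hπU : ∀ u ∈ U, π u = u) (hπperp : ∀ w ∈ Uperp, π w = 0)
    (P : MonoidAlgebra K G →ₗ[F] MonoidAlgebra K G)
    (hP : ∀ (x : MonoidAlgebra K G) (g : G), (P x).coeff g = π (x.coeff g)) :
    (∀ (a : MonoidAlgebra F G) (x : MonoidAlgebra K G), P (a • x) = a • P x) ∧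
    P ∘ₗ P = P ∧
    (∀ x y : MonoidAlgebra K G, TE F (P x) y = TE F x (P y)) ∧
    ((LinearMap.range P : Set (MonoidAlgebra K G)) = {x | ∀ g : G, x.coeff g ∈ U}) ∧
    ((LinearMap.range P : Set (MonoidAlgebra K G)) ∩
        {x | ∀ c ∈ LinearMap.range P, TE F x c = 0} = {0}) ∧
    (¬ ∃ a : MonoidAlgebra K G, ∀ x : MonoidAlgebra K G, P x = x * a) :=
  coefficientwise_projector_lcd_general F K G U Uperp hU0 hU1 hperp hcompl π hπU hπperp P hP
end
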